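/- arXiv:2106.11069 — 3 statements merged into one kernel-verified Lean document; each statement's English description precedes it below -/
import Mathlib

section
/- Let S_1, ..., S_k be nonempty subsets of ℚ² such that each S_i is symmetric (i.e. (p,q) ∈ S_i iff (q,p) ∈ S_i), and suppose that the sumset S_1 + ... + S_k = { (p_1+...+p_k, q_1+...+q_k) : (p_i,q_i) ∈ S_i } is contained in {(0,1),(1,0)} and contains both (0,1) and (1,0). Then there exists a unique index i such that for all j ≠ i the set S_j is a singleton {(a_j,a_j)} for some rational a_j, and moreover S_i ⊆ {(a+1,a),(a,a+1)} for some rational number a. -/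
open Finset

/-- Combinatorial core of Proposition 3.3: if nonempty symmetric subsets
`S 1, ..., S k` of `ℚ²` have sumset contained in `{(0,1),(1,0)}` and containing
both points, then there is a unique index `i` such that all other `S j` are
singletons `{(a_j, a_j)}`, and `S i ⊆ {(a+1,a),(a,a+1)}` for some rational `a`. -/
theorem stmt0 (k : ℕ) (hk : 0 < k) (S : Fin k → Set (ℚ × ℚ))
    (hne : ∀ i, (S i).Nonempty)
    (hsym : ∀ i (p q : ℚ), (p, q) ∈ S i ↔ (q, p) ∈ S i)
    (hsub : ∀ f : Fin k → ℚ × ℚ, (∀ i, f i ∈ S i) →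
      (∑ i, f i) ∈ ({((0 : ℚ), (1 : ℚ)), (1, 0)} : Set (ℚ × ℚ)))
    (h01 : ∃ f : Fin k → ℚ × ℚ, (∀ i, f i ∈ S i) ∧ ∑ i, f i = (0, 1))
    (h10 : ∃ f : Fin k → ℚ × ℚ, (∀ i, f i ∈ S i) ∧ ∑ i, f i = (1, 0)) :
    ∃ i : Fin k,
      (∀ j, j ≠ i → ∃ a : ℚ, S j = {(a, a)}) ∧
      (∀ i' : Fin k, (∀ j, j ≠ i' → ∃ a : ℚ, S j = {(a, a)}) → i' = i) ∧
      ∃ a : ℚ, S i ⊆ {(a + 1, a), (a, a + 1)} := by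
  obtain ⟨f0, hf0, hsum0⟩ := h01
  -- Key: every element of `S i` is `f0 i` or `f0 i + (1,-1)`.
  have key : ∀ i, ∀ x ∈ S i, (x.1 = (f0 i).1 ∧ x.2 = (f0 i).2) ∨
      (x.1 = (f0 i).1 + 1 ∧ x.2 = (f0 i).2 - 1) := by
    intro i x hx
    have hg : ∀ j, Function.update f0 i x j ∈ S j := by
      intro j
      rcases eq_or_ne j i with rfl | h
      · simpa using hx
      · simpa [Function.update_of_ne h] using hf0 j
    have hs := hsub _ hg
    have hsum : ∑ j, Function.update f0 i x j = (0, 1) - f0 i + x := by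
      rw [Finset.sum_update_of_mem (mem_univ i)]
      rw [show (univ : Finset (Fin k)) \ {i} = univ.erase i from by
        ext j; simp [Finset.mem_erase, and_comm]]
      rw [← hsum0, ← Finset.add_sum_erase _ f0 (mem_univ i)]
      abel
    rw [hsum] at hs
    simp only [Set.mem_insert_iff, Set.mem_singleton_iff, Prod.ext_iff, Prod.fst_add,
      Prod.snd_add, Prod.fst_sub, Prod.snd_sub] at hs
    rcases hs with ⟨h1, h2⟩ | ⟨h1, h2⟩
    · exact Or.inl ⟨by linarith, by linarith⟩
    · exact Or.inr ⟨by linarith, by linarith⟩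
  set d : Fin k → ℚ := fun i => (f0 i).2 - (f0 i).1 with hdd
  -- by symmetry each `d i ∈ {0, 1}`
  have hd : ∀ i, d i = 0 ∨ d i = 1 := by
    intro i
    have hmem : ((f0 i).1, (f0 i).2) ∈ S i := by simpa using hf0 i
    have hswap : ((f0 i).2, (f0 i).1) ∈ S i := (hsym i _ _).mp hmem
    rcases key i _ hswap with ⟨h1, h2⟩ | ⟨h1, h2⟩
    · left; simp only [hdd]; dsimp at h1 h2 ⊢; linarith
    · right; simp only [hdd]; dsimp at h1 h2 ⊢; linarith
  have hdnn : ∀ i, 0 ≤ d i := fun i => by rcases hd i with h | h <;> rw [h] <;> norm_num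
  have hsumd : ∑ i, d i = 1 := by
    have h1 : (∑ i, f0 i).1 = 0 := by rw [hsum0]
    have h2 : (∑ i, f0 i).2 = 1 := by rw [hsum0]
    rw [Prod.fst_sum] at h1
    rw [Prod.snd_sum] at h2
    simp only [hdd, Finset.sum_sub_distrib, h1, h2, sub_zero]
  obtain ⟨i, hi⟩ : ∃ i, d i = 1 := by
    by_contra h
    push_neg at h
    have hz : ∀ i, d i = 0 := fun i => (hd i).resolve_right (h i)
    rw [Finset.sum_eq_zero (fun i _ => hz i)] at hsumd
    norm_num at hsumd
  -- all other indices have `d j = 0`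
  have hz : ∀ j, j ≠ i → d j = 0 := by
    intro j hj
    by_contra h
    have h1 : d j = 1 := (hd j).resolve_left h
    have herase : ∑ l, d l = d i + ∑ l ∈ univ.erase i, d l :=
      (Finset.add_sum_erase _ d (mem_univ i)).symm
    have hle : d j ≤ ∑ l ∈ univ.erase i, d l :=
      Finset.single_le_sum (fun l _ => hdnn l) (by simp [hj])
    rw [hsumd, hi] at herase
    rw [h1] at hle
    linarith
  -- singletons away from i
  have hsing : ∀ j, j ≠ i → ∃ a : ℚ, S j = {((a : ℚ), (a : ℚ))} := by
    intro j hj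
    have hdj : (f0 j).2 = (f0 j).1 := by have := hz j hj; simp only [hdd] at this; linarith
    refine ⟨(f0 j).1, ?_⟩
    ext x
    simp only [Set.mem_singleton_iff]
    constructor
    · intro hx
      rcases key j x hx with ⟨h1, h2⟩ | ⟨h1, h2⟩
      · exact Prod.ext h1 (by rw [h2, hdj])
      · exfalso
        have hxm : (x.1, x.2) ∈ S j := by simpa using hx
        have hxs : (x.2, x.1) ∈ S j := (hsym j _ _).mp hxm
        rcases key j _ hxs with ⟨g1, g2⟩ | ⟨g1, g2⟩
        · dsimp at g1 g2; linarith
        · dsimp at g1 g2; linarith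
    · intro hx
      rw [hx]
      have : f0 j = ((f0 j).1, (f0 j).1) := Prod.ext rfl hdj
      rw [← this]
      exact hf0 j
  refine ⟨i, hsing, ?_, ?_⟩
  · intro i' hi'
    by_contra hne'
    obtain ⟨b, hb⟩ := hi' i (Ne.symm hne')
    have hmem : f0 i ∈ S i := hf0 i
    rw [hb, Set.mem_singleton_iff] at hmem
    have e1 : (f0 i).1 = b := by rw [hmem]
    have e2 : (f0 i).2 = b := by rw [hmem]
    have hi1 := hi
    simp only [hdd] at hi1
    linarith
  · refine ⟨(f0 i).1, ?_⟩
    intro x hx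
    have ha : (f0 i).2 = (f0 i).1 + 1 := by
      have := hi; simp only [hdd] at this; linarith
    simp only [Set.mem_insert_iff, Set.mem_singleton_iff]
    rcases key i x hx with ⟨h1, h2⟩ | ⟨h1, h2⟩
    · exact Or.inr (Prod.ext h1 (by rw [h2, ha]))
    · exact Or.inl (Prod.ext h1 (by rw [h2, ha]; ring))
end

section
/- Let V = ⊕_{(p,q)} V^{p,q} be a finite-dimensional complex vector space with a bigrading indexed by pairs of rational numbers, and suppose the bigrading is pure of weight 1 and of type {(1,0),(0,1)} (i.e. V^{p,q} = 0 unless (p,q) ∈ {(1,0),(0,1)}). Suppose V = W_1 ⊗ W_2 as bigraded vector spaces, where W_1, W_2 are nonzero bigraded complex vector spaces (with rational bidegrees) satisfying the symmetry dim W_i^{p,q} = dim W_i^{q,p}. Then either W_1 is concentrated in a single bidegree (a,a) for some rational a and W_2 has type {(1-a,-a),(-a,1-a)}, or the same statement holds with W_1 and W_2 exchanged. -/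
/-- Case `k = 2` of Proposition 3.3, phrased via the dimension functions of the
bigradings: if a bigraded space of type `{(1,0),(0,1)}` is a tensor product of
two nonzero symmetric bigraded spaces, one factor is concentrated in a single
bidegree `(a,a)` and the other has type `{(1-a,-a),(-a,1-a)}`. -/
theorem stmt6 (d1 d2 : ℚ × ℚ → ℕ)
    (h1ne : ∃ x, d1 x ≠ 0) (h2ne : ∃ x, d2 x ≠ 0)
    (h1sym : ∀ p q : ℚ, d1 (p, q) = d1 (q, p))
    (h2sym : ∀ p q : ℚ, d2 (p, q) = d2 (q, p))
    (htype : ∀ x y, d1 x ≠ 0 → d2 y ≠ 0 →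
      x + y ∈ ({((1 : ℚ), (0 : ℚ)), (0, 1)} : Set (ℚ × ℚ))) :
    (∃ a : ℚ, (∀ x, d1 x ≠ 0 → x = (a, a)) ∧
      ∀ y, d2 y ≠ 0 → y = (1 - a, -a) ∨ y = (-a, 1 - a)) ∨
    (∃ a : ℚ, (∀ y, d2 y ≠ 0 → y = (a, a)) ∧
      ∀ x, d1 x ≠ 0 → x = (1 - a, -a) ∨ x = (-a, 1 - a)) := by
  obtain ⟨x, hx⟩ := h1ne
  obtain ⟨y0, hy0⟩ := h2ne
  by_cases h : ∀ z, d1 z ≠ 0 → z = x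
  · obtain ⟨p, q⟩ := x
    have hq : d1 (q, p) ≠ 0 := by rw [h1sym]; exact hx
    have hqp := h _ hq
    have hpq : q = p := by
      simpa [Prod.ext_iff] using congrArg Prod.fst hqp
    subst hpq
    left
    refine ⟨q, fun z hz => h z hz, fun y hy => ?_⟩
    have ht := htype _ _ hx hy
    obtain ⟨r, s⟩ := y
    simp only [Set.mem_insert_iff, Set.mem_singleton_iff, Prod.mk_add_mk,
      Prod.ext_iff] at ht ⊢
    rcases ht with ⟨a1, a2⟩ | ⟨a1, a2⟩
    · left; constructor <;> linarith
    · right; constructor <;> linarith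
  · push_neg at h
    obtain ⟨z, hz, hzx⟩ := h
    obtain ⟨p₁, p₂⟩ := x
    obtain ⟨z₁, z₂⟩ := z
    have key : ∀ y, d2 y ≠ 0 → y = ((1 - p₁ - z₁) / 2, (1 - p₂ - z₂) / 2) := by
      intro y hy
      obtain ⟨r, s⟩ := y
      have h1 := htype _ _ hx hy
      have h2 := htype _ _ hz hy
      simp only [Set.mem_insert_iff, Set.mem_singleton_iff, Prod.mk_add_mk,
        Prod.ext_iff] at h1 h2 ⊢
      rcases h1 with ⟨a1, a2⟩ | ⟨a1, a2⟩ <;> rcases h2 with ⟨b1, b2⟩ | ⟨b1, b2⟩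
      · exact absurd (by simp [Prod.ext_iff]; constructor <;> linarith) hzx
      · constructor <;> linarith
      · constructor <;> linarith
      · exact absurd (by simp [Prod.ext_iff]; constructor <;> linarith) hzx
    set a := (1 - p₁ - z₁) / 2 with ha
    set b := (1 - p₂ - z₂) / 2 with hb
    have hy0' : y0 = (a, b) := key _ hy0
    have hba : d2 (b, a) ≠ 0 := by
      rw [h2sym]; rw [hy0'] at hy0; exact hy0
    have hab : b = a := by
      have := key _ hba
      simpa [Prod.ext_iff] using congrArg Prod.fst this
    right
    refine ⟨a, fun y hy => by rw [key _ hy, hab], fun w hw => ?_⟩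
    have hd2aa : d2 (a, a) ≠ 0 := by rwa [hab] at hba
    have ht := htype _ _ hw hd2aa
    obtain ⟨r, s⟩ := w
    simp only [Set.mem_insert_iff, Set.mem_singleton_iff, Prod.mk_add_mk,
      Prod.ext_iff] at ht ⊢
    rcases ht with ⟨a1, a2⟩ | ⟨a1, a2⟩
    · left; constructor <;> linarith
    · right; constructor <;> linarith
end

section
/- Let G_0 and G_1 be groups and k an algebraically closed field. If V is a finite-dimensional simple k-linear representation of G_0 × G_1, then V is isomorphic to a tensor product W_0 ⊗ W_1 of a simple G_0-module W_0 and a simple G_1-module W_1. -/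
open TensorProduct

section Aux

variable {k : Type} [Field k] {G : Type} [Monoid G]
variable {M : Type} [AddCommGroup M] [Module k M]

/-- Restriction of an action to an invariant submodule, as a monoid hom. -/
noncomputable def auxRestrict (π : G →* (M →ₗ[k] M)) (N : Submodule k M)
    (h : ∀ g, N.map (π g) ≤ N) : G →* (↥N →ₗ[k] ↥N) where
  toFun g := (π g).restrict (fun x hx => h g ⟨x, hx, rfl⟩)
  map_one' := by
    refine LinearMap.ext fun x => Subtype.ext ?_
    simp [LinearMap.restrict_apply]
  map_mul' g₁ g₂ := by
    refine LinearMap.ext fun x => Subtype.ext ?_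
    simp [LinearMap.restrict_apply]

@[simp] lemma auxRestrict_coe (π : G →* (M →ₗ[k] M)) (N : Submodule k M)
    (h : ∀ g, N.map (π g) ≤ N) (g : G) (x : ↥N) :
    (auxRestrict π N h g x : M) = π g x := rfl

variable {V' : Type} [AddCommGroup V'] [Module k V']

/-- Postcomposition action on linear maps. -/
noncomputable def auxComp (π' : G →* (V' →ₗ[k] V')) :
    G →* ((M →ₗ[k] V') →ₗ[k] (M →ₗ[k] V')) where
  toFun g := LinearMap.llcomp k M V' V' (π' g)
  map_one' := by
    refine LinearMap.ext fun f => LinearMap.ext fun x => ?_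
    simp
  map_mul' g₁ g₂ := by
    refine LinearMap.ext fun f => LinearMap.ext fun x => ?_
    simp

@[simp] lemma auxComp_apply (π' : G →* (V' →ₗ[k] V')) (g : G) (f : M →ₗ[k] V') :
    auxComp (M := M) π' g f = π' g ∘ₗ f := rfl

/-- Diagonal action on a finite power. -/
noncomputable def auxPi (π : G →* (M →ₗ[k] M)) (m : ℕ) :
    G →* ((Fin m → M) →ₗ[k] (Fin m → M)) where
  toFun g := LinearMap.pi (fun i => (π g) ∘ₗ LinearMap.proj i)
  map_one' := by
    refine LinearMap.ext fun a => funext fun i => ?_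
    simp
  map_mul' g₁ g₂ := by
    refine LinearMap.ext fun a => funext fun i => ?_
    simp

@[simp] lemma auxPi_apply (π : G →* (M →ₗ[k] M)) (m : ℕ) (g : G) (a : Fin m → M)
    (i : Fin m) : auxPi π m g a i = π g (a i) := rfl

/-- Conjugated action along a linear equivalence. -/
noncomputable def auxConj {M₂ : Type} [AddCommGroup M₂] [Module k M₂]
    (π : G →* (M →ₗ[k] M)) (e : M ≃ₗ[k] M₂) : G →* (M₂ →ₗ[k] M₂) where
  toFun g := e.toLinearMap ∘ₗ π g ∘ₗ e.symm.toLinearMap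
  map_one' := by
    refine LinearMap.ext fun x => ?_
    simp
  map_mul' g₁ g₂ := by
    refine LinearMap.ext fun x => ?_
    simp

@[simp] lemma auxConj_apply {M₂ : Type} [AddCommGroup M₂] [Module k M₂]
    (π : G →* (M →ₗ[k] M)) (e : M ≃ₗ[k] M₂) (g : G) (x : M₂) :
    auxConj π e g x = e (π g (e.symm x)) := rfl

/-- The submodule of equivariant linear maps. -/
noncomputable def auxH (π : G →* (M →ₗ[k] M)) (π' : G →* (V' →ₗ[k] V')) :
    Submodule k (M →ₗ[k] V') where
  carrier := {f | ∀ g, f ∘ₗ π g = π' g ∘ₗ f}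
  add_mem' := by
    intro a b ha hb g
    rw [LinearMap.add_comp, ha g, hb g, LinearMap.comp_add]
  zero_mem' := by
    intro g
    rw [LinearMap.zero_comp, LinearMap.comp_zero]
  smul_mem' := by
    intro c a ha g
    rw [LinearMap.smul_comp, ha g, LinearMap.comp_smul]

lemma mem_auxH {π : G →* (M →ₗ[k] M)} {π' : G →* (V' →ₗ[k] V')} {f : M →ₗ[k] V'} :
    f ∈ auxH π π' ↔ ∀ g, f ∘ₗ π g = π' g ∘ₗ f := Iff.rfl

variable [FiniteDimensional k M]

/-- Existence of a minimal nonzero invariant submodule. -/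
lemma aux_exists_minimal (π : G →* (M →ₗ[k] M)) (N : Submodule k M)
    (hNinv : ∀ g, N.map (π g) ≤ N) (hN0 : N ≠ ⊥) :
    ∃ W : Submodule k M, W ≤ N ∧ (∀ g, W.map (π g) ≤ W) ∧ W ≠ ⊥ ∧
      ∀ U : Submodule k M, U ≤ W → (∀ g, U.map (π g) ≤ U) → U ≠ ⊥ → U = W := by
  classical
  have hP : ∃ d, ∃ W : Submodule k M, (W ≤ N ∧ (∀ g, W.map (π g) ≤ W) ∧ W ≠ ⊥) ∧
      Module.finrank k W = d := ⟨Module.finrank k N, N, ⟨le_rfl, hNinv, hN0⟩, rfl⟩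
  obtain ⟨W, ⟨hWN, hWinv, hW0⟩, hWd⟩ := Nat.find_spec hP
  refine ⟨W, hWN, hWinv, hW0, fun U hUW hUinv hU0 => ?_⟩
  have h1 : Nat.find hP ≤ Module.finrank k U :=
    Nat.find_le ⟨U, ⟨hUW.trans hWN, hUinv, hU0⟩, rfl⟩
  exact Submodule.eq_of_le_of_finrank_le hUW (hWd.le.trans h1)

/-- Simplicity of a minimal invariant submodule, internally. -/
lemma aux_min_simple (π : G →* (M →ₗ[k] M)) {W : Submodule k M}
    (hWinv : ∀ g, W.map (π g) ≤ W)
    (hWmin : ∀ U : Submodule k M, U ≤ W → (∀ g, U.map (π g) ≤ U) → U ≠ ⊥ → U = W) :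
    ∀ U : Submodule k ↥W, (∀ g, U.map (auxRestrict π W hWinv g) ≤ U) → U = ⊥ ∨ U = ⊤ := by
  intro U hU
  rcases eq_or_ne U ⊥ with h | h
  · exact Or.inl h
  · right
    have h1 : U.map W.subtype ≤ W := Submodule.map_subtype_le W U
    have h2 : ∀ g, (U.map W.subtype).map (π g) ≤ U.map W.subtype := by
      rintro g _ ⟨_, ⟨u, hu, rfl⟩, rfl⟩
      exact ⟨auxRestrict π W hWinv g u, hU g ⟨u, hu, rfl⟩, rfl⟩
    have h3 : U.map W.subtype ≠ ⊥ := by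
      intro hbot
      apply h
      rw [eq_bot_iff]
      intro x hx
      have : (x : M) ∈ U.map W.subtype := ⟨x, hx, rfl⟩
      rw [hbot, Submodule.mem_bot] at this
      simpa [Submodule.mem_bot] using Subtype.ext this
    have h4 := hWmin _ h1 h2 h3
    refine Submodule.map_injective_of_injective W.injective_subtype ?_
    rw [h4, Submodule.map_subtype_top]

/-- Schur's lemma over an algebraically closed field. -/
lemma aux_schur [IsAlgClosed k] [Nontrivial M] (π : G →* (M →ₗ[k] M))
    (hsimp : ∀ U : Submodule k M, (∀ g, U.map (π g) ≤ U) → U = ⊥ ∨ U = ⊤)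
    (φ : M →ₗ[k] M) (hφ : ∀ g x, φ (π g x) = π g (φ x)) :
    ∃ c : k, ∀ x, φ x = c • x := by
  obtain ⟨μ, hμ⟩ := Module.End.exists_eigenvalue (φ : Module.End k M)
  refine ⟨μ, fun x => ?_⟩
  have hinv : ∀ g, (Module.End.eigenspace (φ : Module.End k M) μ).map (π g)
      ≤ Module.End.eigenspace (φ : Module.End k M) μ := by
    rintro g _ ⟨y, hy, rfl⟩
    rw [SetLike.mem_coe, Module.End.mem_eigenspace_iff] at hy
    rw [Module.End.mem_eigenspace_iff]
    show φ (π g y) = μ • π g y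
    rw [hφ g y, hy, map_smul]
  rcases hsimp _ hinv with h | h
  · exact absurd h hμ
  · have hx : x ∈ Module.End.eigenspace (φ : Module.End k M) μ := h.symm ▸ Submodule.mem_top
    exact Module.End.mem_eigenspace_iff.mp hx

/-- Transport of simplicity along a linear equivalence. -/
lemma aux_conj_simple {M₂ : Type} [AddCommGroup M₂] [Module k M₂]
    (π : G →* (M →ₗ[k] M)) (e : M ≃ₗ[k] M₂)
    (hsimp : ∀ U : Submodule k M, (∀ g, U.map (π g) ≤ U) → U = ⊥ ∨ U = ⊤) :
    ∀ U : Submodule k M₂, (∀ g, U.map (auxConj π e g) ≤ U) → U = ⊥ ∨ U = ⊤ := by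
  intro U hU
  have hinv : ∀ g, (U.map (e.symm : M₂ →ₗ[k] M)).map (π g) ≤ U.map (e.symm : M₂ →ₗ[k] M) := by
    rintro g _ ⟨_, ⟨u, hu, rfl⟩, rfl⟩
    refine ⟨auxConj π e g u, hU g ⟨u, hu, rfl⟩, ?_⟩
    show e.symm (e (π g (e.symm u))) = π g (e.symm u)
    exact e.symm_apply_apply _
  rcases hsimp _ hinv with h | h
  · left
    ext x
    simp only [Submodule.mem_bot]
    constructor
    · intro hx
      have : e.symm x ∈ U.map (e.symm : M₂ →ₗ[k] M) := ⟨x, hx, rfl⟩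
      rw [h, Submodule.mem_bot] at this
      have := congrArg e this
      simpa using this
    · rintro rfl; exact U.zero_mem
  · right
    rw [eq_top_iff]
    rintro x -
    have : e.symm x ∈ U.map (e.symm : M₂ →ₗ[k] M) := h.symm ▸ Submodule.mem_top
    obtain ⟨u, hu, hux⟩ := this
    have : u = x := e.symm.injective hux
    exact this ▸ hu

end Aux


/-- Simplicity of the multiplicity space. -/
lemma aux_H_simple {k : Type} [Field k] {G₀ G₁ : Type} [Monoid G₀] [Monoid G₁]
    {V : Type} [AddCommGroup V] [Module k V] [FiniteDimensional k V]
    {W' H' : Type} [AddCommGroup W'] [Module k W'] [FiniteDimensional k W'] [Nontrivial W']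
    [AddCommGroup H'] [Module k H'] [FiniteDimensional k H']
    (ρ : Representation k (G₀ × G₁) V)
    (hsimple : ∀ U : Submodule k V, (∀ g : G₀ × G₁, U.map (ρ g) ≤ U) → U = ⊥ ∨ U = ⊤)
    (σ : G₀ →* (W' →ₗ[k] W')) (τ : G₁ →* (H' →ₗ[k] H'))
    (ε : (W' ⊗[k] H') →ₗ[k] V) (hεinj : Function.Injective ε)
    (hεcomm : ∀ (g₀ : G₀) (g₁ : G₁) (t : W' ⊗[k] H'),
      ρ (g₀, g₁) (ε t) = ε (TensorProduct.map (σ g₀) (τ g₁) t))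
    (hne : ∀ u : H', u ≠ 0 → ∃ w : W', ε (w ⊗ₜ u) ≠ 0) :
    ∀ U : Submodule k H', (∀ g, U.map (τ g) ≤ U) → U = ⊥ ∨ U = ⊤ := by
  intro U hU
  rcases eq_or_ne U ⊥ with h | h
  · exact Or.inl h
  right
  set ψ : (W' ⊗[k] ↥U) →ₗ[k] V := ε ∘ₗ LinearMap.lTensor W' U.subtype with hψ
  set τU : G₁ →* (↥U →ₗ[k] ↥U) := auxRestrict τ U hU with hτU
  have hψcomm : ∀ (g₀ : G₀) (g₁ : G₁) (t : W' ⊗[k] ↥U),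
      ρ (g₀, g₁) (ψ t) = ψ (TensorProduct.map (σ g₀) (τU g₁) t) := by
    intro g₀ g₁ t
    have hco : ρ (g₀, g₁) ∘ₗ ψ = ψ ∘ₗ TensorProduct.map (σ g₀) (τU g₁) := by
      apply TensorProduct.ext'
      intro w u
      simp only [LinearMap.comp_apply, hψ, LinearMap.lTensor_tmul, TensorProduct.map_tmul]
      rw [hεcomm g₀ g₁]
      congr 1
    simpa using LinearMap.congr_fun hco t
  have hinv : ∀ g : G₀ × G₁, (LinearMap.range ψ).map (ρ g) ≤ LinearMap.range ψ := by
    rintro ⟨g₀, g₁⟩ _ ⟨_, ⟨t, rfl⟩, rfl⟩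
    exact ⟨TensorProduct.map (σ g₀) (τU g₁) t, (hψcomm g₀ g₁ t).symm⟩
  have hψinj : Function.Injective ψ := by
    rw [hψ]
    refine Function.Injective.comp (g := ε) hεinj ?_
    exact Module.Flat.lTensor_preserves_injective_linearMap U.subtype U.injective_subtype
  rcases hsimple _ hinv with hX | hX
  · exfalso
    haveI : Nontrivial ↥U := Submodule.nontrivial_iff_ne_bot.mpr h
    obtain ⟨u, hu⟩ := exists_ne (0 : ↥U)
    have hu1 : (u : H') ≠ 0 := fun hz => hu (Subtype.ext hz)
    obtain ⟨w, hw⟩ := hne (u : H') hu1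
    have hmem : ψ (w ⊗ₜ u) ∈ LinearMap.range ψ := ⟨_, rfl⟩
    rw [hX, Submodule.mem_bot] at hmem
    apply hw
    rw [← hmem]
    rfl
  · -- dimension count
    have hd1 : Module.finrank k (W' ⊗[k] ↥U) = Module.finrank k V := by
      rw [← LinearMap.finrank_range_of_inj hψinj, hX, finrank_top]
    have hd2 : Module.finrank k (W' ⊗[k] H') = Module.finrank k V := by
      rw [← LinearMap.finrank_range_of_inj hεinj,
        LinearMap.range_eq_top.mpr ?_, finrank_top]
      intro v
      have : v ∈ LinearMap.range ψ := hX.symm ▸ Submodule.mem_top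
      obtain ⟨t, rfl⟩ := this
      exact ⟨LinearMap.lTensor W' U.subtype t, rfl⟩
    rw [Module.finrank_tensorProduct] at hd1 hd2
    have hd3 : Module.finrank k ↥U = Module.finrank k H' :=
      Nat.eq_of_mul_eq_mul_left Module.finrank_pos (hd1.trans hd2.symm)
    apply Submodule.eq_of_le_of_finrank_le le_top
    rw [finrank_top]
    exact hd3.ge


set_option maxHeartbeats 2000000 in
set_option synthInstance.maxHeartbeats 1000000 in
/-- A finite-dimensional simple representation of a product of two groups over
an algebraically closed field is an external tensor product of simple
representations of the factors. -/
theorem stmt19 {k : Type} [Field k] [IsAlgClosed k]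
    {G₀ G₁ : Type} [Group G₀] [Group G₁]
    {V : Type} [AddCommGroup V] [Module k V] [FiniteDimensional k V]
    [Nontrivial V] (ρ : Representation k (G₀ × G₁) V)
    (hsimple : ∀ U : Submodule k V,
      (∀ g : G₀ × G₁, U.map (ρ g) ≤ U) → U = ⊥ ∨ U = ⊤) :
    ∃ (n₀ n₁ : ℕ) (ρ₀ : Representation k G₀ (Fin n₀ → k))
      (ρ₁ : Representation k G₁ (Fin n₁ → k)),
      0 < n₀ ∧ 0 < n₁ ∧
      (∀ U : Submodule k (Fin n₀ → k),
        (∀ g : G₀, U.map (ρ₀ g) ≤ U) → U = ⊥ ∨ U = ⊤) ∧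
      (∀ U : Submodule k (Fin n₁ → k),
        (∀ g : G₁, U.map (ρ₁ g) ≤ U) → U = ⊥ ∨ U = ⊤) ∧
      ∃ e : V ≃ₗ[k] (Fin n₀ → k) ⊗[k] (Fin n₁ → k),
        ∀ (g₀ : G₀) (g₁ : G₁) (v : V),
          e (ρ (g₀, g₁) v) = TensorProduct.map (ρ₀ g₀) (ρ₁ g₁) (e v) := by
  classical
  set ρL : G₀ →* (V →ₗ[k] V) := ρ.comp (MonoidHom.inl G₀ G₁) with hρL
  set ρR : G₁ →* (V →ₗ[k] V) := ρ.comp (MonoidHom.inr G₀ G₁) with hρR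
  have hsplit : ∀ (g₀ : G₀) (g₁ : G₁), ρ (g₀, g₁) = ρR g₁ ∘ₗ ρL g₀ := by
    intro g₀ g₁
    have h1 : (g₀, g₁) = (1, g₁) * (g₀, 1) := by simp
    rw [h1, map_mul]
    rfl
  have hsplit' : ∀ (g₀ : G₀) (g₁ : G₁), ρ (g₀, g₁) = ρL g₀ ∘ₗ ρR g₁ := by
    intro g₀ g₁
    have h1 : (g₀, g₁) = (g₀, 1) * (1, g₁) := by simp
    rw [h1, map_mul]
    rfl
  have hLR : ∀ (g₀ : G₀) (g₁ : G₁) (v : V), ρL g₀ (ρR g₁ v) = ρR g₁ (ρL g₀ v) := by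
    intro g₀ g₁ v
    have h2 : ρL g₀ ∘ₗ ρR g₁ = ρR g₁ ∘ₗ ρL g₀ := (hsplit' g₀ g₁).symm.trans (hsplit g₀ g₁)
    simpa using LinearMap.congr_fun h2 v
  -- minimal nonzero G₀-invariant submodule
  have htopbot : (⊤ : Submodule k V) ≠ ⊥ := by
    obtain ⟨v, hv⟩ := exists_ne (0 : V)
    intro h
    rw [Submodule.eq_bot_iff] at h
    exact hv (h v Submodule.mem_top)
  obtain ⟨W, -, hWinv, hW0, hWmin⟩ := aux_exists_minimal ρL ⊤ (fun g => le_top) htopbot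
  haveI : Nontrivial ↥W := Submodule.nontrivial_iff_ne_bot.mpr hW0
  set σ : G₀ →* (↥W →ₗ[k] ↥W) := auxRestrict ρL W hWinv with hσ
  have hWsimp : ∀ U : Submodule k ↥W, (∀ g, U.map (σ g) ≤ U) → U = ⊥ ∨ U = ⊤ :=
    aux_min_simple ρL hWinv hWmin
  -- the space of G₀-equivariant maps W →ₗ V
  set H : Submodule k (↥W →ₗ[k] V) := auxH σ ρL with hHdef
  have hHstab : ∀ g, H.map (auxComp (M := ↥W) ρR g) ≤ H := by
    rintro g _ ⟨f, hf, rfl⟩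
    rw [SetLike.mem_coe] at hf
    replace hf : ∀ g₀, f ∘ₗ σ g₀ = ρL g₀ ∘ₗ f := mem_auxH.mp hf
    refine mem_auxH.mpr fun g₀ => ?_
    rw [auxComp_apply, LinearMap.comp_assoc, hf g₀, ← LinearMap.comp_assoc,
      ← LinearMap.comp_assoc]
    congr 1
    exact LinearMap.ext fun v => (hLR g₀ g v).symm
  set τ : G₁ →* (↥H →ₗ[k] ↥H) := auxRestrict (auxComp ρR) H hHstab with hτ
  have hτcoe : ∀ (g : G₁) (f : ↥H), ((τ g f : ↥W →ₗ[k] V)) = ρR g ∘ₗ (f : ↥W →ₗ[k] V) :=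
    fun g f => rfl
  have hfequi : ∀ (f : ↥H) (g : G₀) (w : ↥W),
      (f : ↥W →ₗ[k] V) (σ g w) = ρL g ((f : ↥W →ₗ[k] V) w) := by
    intro f g w
    have hf : ∀ g', (f : ↥W →ₗ[k] V) ∘ₗ σ g' = ρL g' ∘ₗ (f : ↥W →ₗ[k] V) := mem_auxH.mp f.2
    simpa using LinearMap.congr_fun (hf g) w
  -- evaluation map
  set ε : (↥W ⊗[k] ↥H) →ₗ[k] V := TensorProduct.lift (H.subtype.flip) with hε
  have hεtmul : ∀ (w : ↥W) (f : ↥H), ε (w ⊗ₜ f) = (f : ↥W →ₗ[k] V) w := fun w f => rfl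
  have hεcomm : ∀ (g₀ : G₀) (g₁ : G₁) (t : ↥W ⊗[k] ↥H),
      ρ (g₀, g₁) (ε t) = ε (TensorProduct.map (σ g₀) (τ g₁) t) := by
    intro g₀ g₁ t
    have h : ρ (g₀, g₁) ∘ₗ ε = ε ∘ₗ TensorProduct.map (σ g₀) (τ g₁) := by
      apply TensorProduct.ext'
      intro w f
      simp only [LinearMap.comp_apply, TensorProduct.map_tmul, hεtmul]
      rw [hτcoe]
      simp only [LinearMap.comp_apply]
      rw [hfequi f g₀ w, hsplit g₀ g₁]
      simp
    simpa using LinearMap.congr_fun h t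
  -- surjectivity of ε
  have hWne : ∃ w : ↥W, w ≠ 0 := exists_ne 0
  have hιmem : W.subtype ∈ H := by
    rw [hHdef, mem_auxH]
    intro g
    exact LinearMap.ext fun w => rfl
  set ι : ↥H := ⟨W.subtype, hιmem⟩ with hι
  have hεsurj : Function.Surjective ε := by
    have hinv : ∀ g : G₀ × G₁, (LinearMap.range ε).map (ρ g) ≤ LinearMap.range ε := by
      rintro ⟨g₀, g₁⟩ _ ⟨_, ⟨t, rfl⟩, rfl⟩
      exact ⟨TensorProduct.map (σ g₀) (τ g₁) t, (hεcomm g₀ g₁ t).symm⟩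
    rcases hsimple _ hinv with h | h
    · exfalso
      obtain ⟨w, hw⟩ := hWne
      have hmem : ε (w ⊗ₜ ι) ∈ LinearMap.range ε := ⟨_, rfl⟩
      rw [h, Submodule.mem_bot, hεtmul] at hmem
      exact hw (Submodule.coe_eq_zero.mp hmem)
    · exact LinearMap.range_eq_top.mp h
  -- H is nontrivial
  haveI : Nontrivial ↥H := by
    refine ⟨ι, 0, fun hc => ?_⟩
    obtain ⟨w, hw⟩ := hWne
    have h0 : (ι : ↥W →ₗ[k] V) w = 0 := by rw [hc]; rfl
    exact hw (Submodule.coe_eq_zero.mp h0)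
  set m := Module.finrank k ↥H with hm
  set b : Module.Basis (Fin m) k ↥H := Module.finBasis k ↥H with hb
  set Φ : (Fin m → ↥W) →ₗ[k] V :=
    ∑ j : Fin m, ((b j : ↥W →ₗ[k] V) ∘ₗ LinearMap.proj j) with hΦ
  have hΦapp : ∀ a : Fin m → ↥W, Φ a = ∑ j : Fin m, (b j : ↥W →ₗ[k] V) (a j) := by
    intro a
    rw [hΦ]
    simp [LinearMap.sum_apply]
  set σm : G₀ →* ((Fin m → ↥W) →ₗ[k] (Fin m → ↥W)) := auxPi σ m with hσm
  have hΦequi : ∀ (g : G₀) (a : Fin m → ↥W), Φ (σm g a) = ρL g (Φ a) := by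
    intro g a
    rw [hΦapp, hΦapp, map_sum]
    exact Finset.sum_congr rfl fun j _ => hfequi (b j) g (a j)
  have hKinv : ∀ g, (LinearMap.ker Φ).map (σm g) ≤ LinearMap.ker Φ := by
    rintro g _ ⟨a, ha, rfl⟩
    rw [SetLike.mem_coe, LinearMap.mem_ker] at ha
    rw [LinearMap.mem_ker, hΦequi, ha, map_zero]
  -- Φ is injective
  have hΦker : LinearMap.ker Φ = ⊥ := by
    by_contra hK
    obtain ⟨K', hK'le, hK'inv, hK'0, hK'min⟩ := aux_exists_minimal σm (LinearMap.ker Φ) hKinv hK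
    haveI : Nontrivial ↥K' := Submodule.nontrivial_iff_ne_bot.mpr hK'0
    set σ' : G₀ →* (↥K' →ₗ[k] ↥K') := auxRestrict σm K' hK'inv with hσ'
    have hK'simp : ∀ U : Submodule k ↥K', (∀ g, U.map (σ' g) ≤ U) → U = ⊥ ∨ U = ⊤ :=
      aux_min_simple σm hK'inv hK'min
    set π' : Fin m → (↥K' →ₗ[k] ↥W) := fun j => (LinearMap.proj j) ∘ₗ K'.subtype with hπ'
    have hπ'app : ∀ (j : Fin m) (x : ↥K'), π' j x = (x : Fin m → ↥W) j := fun j x => rfl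
    have hπ'equi : ∀ (j : Fin m) (g : G₀) (x : ↥K'), π' j (σ' g x) = σ g (π' j x) :=
      fun j g x => rfl
    obtain ⟨x₀, hx₀⟩ := exists_ne (0 : ↥K')
    have hj : ∃ j₀, (x₀ : Fin m → ↥W) j₀ ≠ 0 := by
      by_contra hcon
      push_neg at hcon
      exact hx₀ (Subtype.ext (funext fun j => hcon j))
    obtain ⟨j₀, hj₀⟩ := hj
    have hkerinv : ∀ g, (LinearMap.ker (π' j₀)).map (σ' g) ≤ LinearMap.ker (π' j₀) := by
      rintro g _ ⟨y, hy, rfl⟩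
      rw [SetLike.mem_coe, LinearMap.mem_ker] at hy
      rw [LinearMap.mem_ker, hπ'equi, hy, map_zero]
    have hker : LinearMap.ker (π' j₀) = ⊥ := by
      rcases hK'simp _ hkerinv with h | h
      · exact h
      · exfalso
        have hx : x₀ ∈ LinearMap.ker (π' j₀) := h.symm ▸ Submodule.mem_top
        exact hj₀ (LinearMap.mem_ker.mp hx)
    have hrnginv : ∀ g, (LinearMap.range (π' j₀)).map (σ g) ≤ LinearMap.range (π' j₀) := by
      rintro g _ ⟨_, ⟨y, rfl⟩, rfl⟩
      exact ⟨σ' g y, hπ'equi j₀ g y⟩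
    have hrng : LinearMap.range (π' j₀) = ⊤ := by
      rcases hWsimp _ hrnginv with h | h
      · exfalso
        have hx : π' j₀ x₀ ∈ LinearMap.range (π' j₀) := ⟨x₀, rfl⟩
        rw [h, Submodule.mem_bot] at hx
        exact hj₀ hx
      · exact h
    set e' : ↥K' ≃ₗ[k] ↥W := LinearEquiv.ofBijective (π' j₀)
      ⟨LinearMap.ker_eq_bot.mp hker, LinearMap.range_eq_top.mp hrng⟩ with he'
    have he'coe : ∀ x, e' x = π' j₀ x := fun x => rfl
    have he'symm : ∀ (g : G₀) (w : ↥W), e'.symm (σ g w) = σ' g (e'.symm w) := by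
      intro g w
      apply e'.injective
      rw [e'.apply_symm_apply, he'coe, hπ'equi, ← he'coe, e'.apply_symm_apply]
    have hschur : ∀ j : Fin m, ∃ c : k, ∀ w2 : ↥W, π' j (e'.symm w2) = c • w2 := by
      intro j
      obtain ⟨c, hcc⟩ := aux_schur σ hWsimp ((π' j) ∘ₗ (e'.symm : ↥W →ₗ[k] ↥K'))
        (fun g w2 => by
          simp only [LinearMap.comp_apply, LinearEquiv.coe_coe]
          rw [he'symm, hπ'equi])
      exact ⟨c, fun w2 => hcc w2⟩
    choose c hc using hschur
    have hcj₀app : ∀ w2 : ↥W, π' j₀ (e'.symm w2) = w2 := by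
      intro w2
      rw [← he'coe, e'.apply_symm_apply]
    have hcj₀ : c j₀ = 1 := by
      obtain ⟨w2, hw2⟩ := exists_ne (0 : ↥W)
      have h1 : c j₀ • w2 = w2 := by rw [← hc j₀ w2, hcj₀app]
      have h2 : (c j₀ - 1) • w2 = 0 := by rw [sub_smul, one_smul, h1, sub_self]
      rcases smul_eq_zero.mp h2 with h | h
      · exact sub_eq_zero.mp h
      · exact absurd h hw2
    have hxj : ∀ (x : ↥K') (j : Fin m),
        (x : Fin m → ↥W) j = c j • (x : Fin m → ↥W) j₀ := by
      intro x j
      have h1 := hc j (e' x)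
      rw [e'.symm_apply_apply] at h1
      rw [← hπ'app, h1, he'coe, hπ'app]
    have hzero : ∀ w2 : ↥W, ∑ j : Fin m, c j • ((b j : ↥W →ₗ[k] V) w2) = 0 := by
      intro w2
      set x : ↥K' := e'.symm w2 with hx
      have hx0 : Φ (x : Fin m → ↥W) = 0 := LinearMap.mem_ker.mp (hK'le x.2)
      have hxx : (x : Fin m → ↥W) j₀ = w2 := by rw [← hπ'app, hx, hcj₀app]
      calc ∑ j : Fin m, c j • ((b j : ↥W →ₗ[k] V) w2)
          = ∑ j : Fin m, (b j : ↥W →ₗ[k] V) ((x : Fin m → ↥W) j) := by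
            refine Finset.sum_congr rfl fun j _ => ?_
            rw [hxj x j, hxx, map_smul]
        _ = Φ (x : Fin m → ↥W) := (hΦapp _).symm
        _ = 0 := hx0
    have hcoef : (∑ j : Fin m, c j • b j) = (0 : ↥H) := by
      have hcoe : ((∑ j : Fin m, c j • b j : ↥H) : ↥W →ₗ[k] V)
          = ∑ j : Fin m, c j • (b j : ↥W →ₗ[k] V) := by
        push_cast
        rfl
      have : ((∑ j : Fin m, c j • b j : ↥H) : ↥W →ₗ[k] V) = 0 := by
        rw [hcoe]
        refine LinearMap.ext fun w2 => ?_
        simpa using hzero w2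
      exact Subtype.ext this
    have hall := Fintype.linearIndependent_iff.mp b.linearIndependent c hcoef j₀
    rw [hcj₀] at hall
    exact one_ne_zero hall
  -- ε is injective
  have hsur2 : ∀ t : ↥W ⊗[k] ↥H, ∃ a : Fin m → ↥W, (∑ j : Fin m, (a j) ⊗ₜ[k] (b j)) = t := by
    intro t
    induction t using TensorProduct.induction_on with
    | zero => exact ⟨0, by simp⟩
    | tmul w f =>
      refine ⟨fun j => b.repr f j • w, ?_⟩
      calc ∑ j : Fin m, (b.repr f j • w) ⊗ₜ[k] b j
          = ∑ j : Fin m, w ⊗ₜ[k] (b.repr f j • b j) := by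
            refine Finset.sum_congr rfl fun j _ => ?_
            rw [TensorProduct.smul_tmul]
        _ = w ⊗ₜ[k] (∑ j : Fin m, b.repr f j • b j) := by rw [TensorProduct.tmul_sum]
        _ = w ⊗ₜ[k] f := by rw [Module.Basis.sum_repr]
    | add t₁ t₂ h₁ h₂ =>
      obtain ⟨a₁, rfl⟩ := h₁
      obtain ⟨a₂, rfl⟩ := h₂
      refine ⟨a₁ + a₂, ?_⟩
      rw [← Finset.sum_add_distrib]
      refine Finset.sum_congr rfl fun j _ => ?_
      rw [Pi.add_apply, TensorProduct.add_tmul]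
  have hεΦ : ∀ a : Fin m → ↥W, ε (∑ j : Fin m, (a j) ⊗ₜ[k] b j) = Φ a := by
    intro a
    rw [map_sum, hΦapp]
    exact Finset.sum_congr rfl fun j _ => hεtmul _ _
  have hεinj : Function.Injective ε := by
    intro t₁ t₂ h
    obtain ⟨a₁, rfl⟩ := hsur2 t₁
    obtain ⟨a₂, rfl⟩ := hsur2 t₂
    rw [hεΦ, hεΦ] at h
    rw [LinearMap.ker_eq_bot.mp hΦker h]
  set eiso : (↥W ⊗[k] ↥H) ≃ₗ[k] V := LinearEquiv.ofBijective ε ⟨hεinj, hεsurj⟩ with heiso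
  -- simplicity of H as a G₁-module
  have hHsimp : ∀ U : Submodule k ↥H, (∀ g, U.map (τ g) ≤ U) → U = ⊥ ∨ U = ⊤ := by
    refine aux_H_simple ρ hsimple σ τ ε hεinj hεcomm ?_
    intro u hu
    have hu1 : (u : ↥W →ₗ[k] V) ≠ 0 := fun hz => hu (Subtype.ext hz)
    obtain ⟨w, hw⟩ : ∃ w, (u : ↥W →ₗ[k] V) w ≠ 0 := by
      by_contra hcon
      push_neg at hcon
      exact hu1 (LinearMap.ext hcon)
    exact ⟨w, by rw [hεtmul]; exact hw⟩
  -- assemble the result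
  set n₀ := Module.finrank k ↥W with hn₀
  set e₀ : ↥W ≃ₗ[k] (Fin n₀ → k) := (Module.finBasis k ↥W).equivFun with he₀
  set e₁ : ↥H ≃ₗ[k] (Fin m → k) := b.equivFun with he₁
  have key : ∀ (g₀ : G₀) (g₁ : G₁) (t : ↥W ⊗[k] ↥H),
      (TensorProduct.congr e₀ e₁) (TensorProduct.map (σ g₀) (τ g₁) t)
        = TensorProduct.map (auxConj σ e₀ g₀) (auxConj τ e₁ g₁)
            ((TensorProduct.congr e₀ e₁) t) := by
    intro g₀ g₁ t
    have hco : (TensorProduct.congr e₀ e₁).toLinearMap ∘ₗ TensorProduct.map (σ g₀) (τ g₁)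
        = TensorProduct.map (auxConj σ e₀ g₀) (auxConj τ e₁ g₁) ∘ₗ
          (TensorProduct.congr e₀ e₁).toLinearMap := by
      apply TensorProduct.ext'
      intro w f
      simp [TensorProduct.congr_tmul, TensorProduct.map_tmul]
    exact LinearMap.congr_fun hco t
  refine ⟨n₀, m, auxConj σ e₀, auxConj τ e₁, Module.finrank_pos, Module.finrank_pos,
    aux_conj_simple σ e₀ hWsimp, aux_conj_simple τ e₁ hHsimp,
    eiso.symm.trans (TensorProduct.congr e₀ e₁), ?_⟩
  intro g₀ g₁ v
  have hstep : eiso.symm (ρ (g₀, g₁) v) = TensorProduct.map (σ g₀) (τ g₁) (eiso.symm v) := by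
    apply eiso.injective
    rw [eiso.apply_symm_apply]
    have : eiso (TensorProduct.map (σ g₀) (τ g₁) (eiso.symm v))
        = ε (TensorProduct.map (σ g₀) (τ g₁) (eiso.symm v)) := rfl
    rw [this, ← hεcomm]
    congr 1
    exact (eiso.apply_symm_apply v).symm
  rw [LinearEquiv.trans_apply, LinearEquiv.trans_apply, hstep, key]
end
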